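/- Let B be a 𝔤-crystal each of whose connected components is isomorphic to a highest weight crystal B(λ) for some λ ∈ P⁺. If X and Y are ideal subsets of B, then X ∪ Y is an ideal subset of B. -/

import Mathlib

/-!
Abstract framework for crystals of symmetrizable Kac–Moody algebras,
Demazure crystals, extremal/ideal/principal subsets and Demazure atoms,
following "Demazure crystals and their unions".

The Dynkin index set is `I`, the weight lattice is an additive group `P`
with simple roots `α i` and coroot pairings `coroot i = ⟨α_i^∨, ·⟩`.
The Weyl group is presented by a Coxeter system `cs : CoxeterSystem M W`
acting on `P` so that `cs.simple i • μ = μ - ⟨α_i^∨, μ⟩ • α i`.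
-/

namespace DemazurePaper

open scoped Classical

/-- The data of a `𝔤`-crystal: a set `B` with weight map `wt`, string lengths
`eps i = ε_i`, `phi i = φ_i`, and raising/lowering operators `e i`, `f i`
(valued in `Option B`, where `none` plays the role of `0`), subject to the
usual crystal axioms.  Here `ε_i(b) = max {k | e_i^k(b) ≠ 0}` and
`φ_i(b) = max {k | f_i^k(b) ≠ 0}` are encoded by `eps_spec` and `phi_spec`. -/
structure Crystal (I : Type*) (P : Type*) [AddCommGroup P]
    (α : I → P) (coroot : I → P →+ ℤ) where
  /-- the underlying set of the crystal -/
  B : Type*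
  wt : B → P
  eps : I → B → ℤ
  phi : I → B → ℤ
  e : I → B → Option B
  f : I → B → Option B
  phi_eq : ∀ (i : I) (b : B), phi i b = coroot i (wt b) + eps i b
  e_iff_f : ∀ (i : I) (b b' : B), e i b = some b' ↔ f i b' = some b
  wt_e : ∀ (i : I) (b b' : B), e i b = some b' → wt b' = wt b + α i
  eps_e : ∀ (i : I) (b b' : B), e i b = some b' → eps i b = eps i b' + 1
  phi_e : ∀ (i : I) (b b' : B), e i b = some b' → phi i b' = phi i b + 1
  eps_spec : ∀ (i : I) (b : B) (k : ℕ),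
    ((fun ob => Option.bind ob (e i))^[k] (some b)).isSome ↔ (k : ℤ) ≤ eps i b
  phi_spec : ∀ (i : I) (b : B) (k : ℕ),
    ((fun ob => Option.bind ob (f i))^[k] (some b)).isSome ↔ (k : ℤ) ≤ phi i b

namespace Crystal

variable {I : Type*} {P : Type*} [AddCommGroup P]
  {α : I → P} {coroot : I → P →+ ℤ}

variable (C : Crystal I P α coroot)

/-- `e_i^k`, the `k`-th iterate of the raising operator `e_i`. -/
def eIter (i : I) (k : ℕ) (b : C.B) : Option C.B :=
  (fun ob => Option.bind ob (C.e i))^[k] (some b)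

/-- `f_i^k`, the `k`-th iterate of the lowering operator `f_i`. -/
def fIter (i : I) (k : ℕ) (b : C.B) : Option C.B :=
  (fun ob => Option.bind ob (C.f i))^[k] (some b)

/-- `e_i^*(b) = e_i^{ε_i(b)}(b)`, the head of the `i`-string through `b`. -/
noncomputable def estar (i : I) (b : C.B) : C.B :=
  (C.eIter i (C.eps i b).toNat b).getD b

/-- `f_i^*(b) = f_i^{φ_i(b)}(b)`, the tail of the `i`-string through `b`. -/
noncomputable def fstar (i : I) (b : C.B) : C.B :=
  (C.fIter i (C.phi i b).toNat b).getD b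

/-- `estars [i₁, …, i_k] b = e_{i₁}^* (e_{i₂}^* (⋯ (e_{i_k}^* b)))`. -/
noncomputable def estars (l : List I) (b : C.B) : C.B := l.foldr C.estar b

/-- `fstars [i₁, …, i_k] b = f_{i₁}^* (f_{i₂}^* (⋯ (f_{i_k}^* b)))`. -/
noncomputable def fstars (l : List I) (b : C.B) : C.B := l.foldr C.fstar b

/-- The `i`-string through `b`: all nonzero `e_i^m(b)` and `f_i^n(b)`. -/
def string (i : I) (b : C.B) : Set C.B :=
  {b' | ∃ k : ℕ, C.eIter i k b = some b' ∨ C.fIter i k b = some b'}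

/-- A subset `X` of the crystal is *extremal* if it is nonempty and for every
`i`-string `S`, the intersection `S ∩ X` is either empty, or all of `S`, or
the singleton of the head of the string. -/
def IsExtremal (X : Set C.B) : Prop :=
  X.Nonempty ∧ ∀ (i : I) (b : C.B),
    C.string i b ∩ X = ∅ ∨ C.string i b ∩ X = C.string i b ∨
      ∃ h : C.B, C.e i h = none ∧ C.string i b ∩ X = {h}

/-- An extremal subset `X` is *ideal* (relative to the predicate `ext` of being
an extremal element) if whenever `x, y ∈ X` are extremal elements with
`x = e_j^* e_{i₁}^* ⋯ e_{i_m}^* (y)`, also `f_{i_m}^* ⋯ f_{i₁}^* (x) ∈ X`. -/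
def IsIdeal (ext : C.B → Prop) (X : Set C.B) : Prop :=
  C.IsExtremal X ∧ ∀ (x y : C.B) (j : I) (L : List I),
    x ∈ X → y ∈ X → ext x → ext y →
      x = C.estars (j :: L) y → C.fstars L.reverse x ∈ X

/-- `Fapply [i₁, …, i_ℓ] X = ⋃_{m₁, …, m_ℓ ≥ 0} f_{i₁}^{m₁} ⋯ f_{i_ℓ}^{m_ℓ} (X)`,
the result of applying the monoid of lowering operators along a word to `X`. -/
def Fapply : List I → Set C.B → Set C.B
  | [], X => X
  | i :: l, X => {b | ∃ (k : ℕ) (b' : C.B), b' ∈ Fapply l X ∧ C.fIter i k b' = some b}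

/-- `fPow [(i₁,k₁), …, (i_n,k_n)] b = f_{i_n}^{k_n} ⋯ f_{i₁}^{k₁} (b)`
(the operator `f_{i₁}^{k₁}` is applied first). -/
def fPow : List (I × ℕ) → C.B → Option C.B
  | [], b => some b
  | p :: l, b => (C.fIter p.1 p.2 b).bind (fPow l)


/-- Every connected component of the crystal is a highest weight crystal
`B(λ)` for some dominant `λ`: every element lies below a unique highest
weight vector, whose weight is dominant. -/
def IsHWDecomposable (C : Crystal I P α coroot) : Prop :=
  ∀ b : C.B, ∃! h : C.B, (∀ i : I, C.e i h = none) ∧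
    (∀ i : I, 0 ≤ coroot i (C.wt h)) ∧
    ∃ l : List I, b ∈ C.Fapply l ({h} : Set C.B)

end Crystal

/-- A highest weight crystal `B(λ)`: a connected crystal with a unique highest
weight vector `hw = b_λ` of weight `lam = λ`, every element being reachable
from `b_λ` by lowering operators. -/
structure HighestWeightCrystal (I : Type*) (P : Type*) [AddCommGroup P]
    (α : I → P) (coroot : I → P →+ ℤ) (lam : P)
    extends Crystal I P α coroot where
  hw : B
  wt_hw : wt hw = lam
  e_hw : ∀ i : I, e i hw = none
  hw_unique : ∀ b : B, (∀ i : I, e i b = none) → b = hw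
  connected : ∀ b : B, ∃ l : List I, b ∈ toCrystal.Fapply l {hw}


section ExtremalElt

variable {I : Type*} {P : Type*} [AddCommGroup P]
  {α : I → P} {coroot : I → P →+ ℤ} {lam : P}

/-- An element of `B(λ)` is *extremal* if its weight lies in the Weyl orbit `Wλ`. -/
def IsExtremalElt (W : Type*) [Monoid W] [MulAction W P]
    (C : HighestWeightCrystal I P α coroot lam) (b : C.B) : Prop :=
  C.wt b ∈ MulAction.orbit W lam

/-- An element `b` of a crystal all of whose components are highest weight
crystals is *extremal* if `wt b` lies in the Weyl orbit of the weight of the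
highest weight vector of the component of `b`. -/
def IsExtremalEltGen (W : Type*) [Monoid W] [MulAction W P]
    (C : Crystal I P α coroot) (b : C.B) : Prop :=
  ∃ h : C.B, (∀ i : I, C.e i h = none) ∧
    (∃ l : List I, b ∈ C.Fapply l ({h} : Set C.B)) ∧
    C.wt b ∈ MulAction.orbit W (C.wt h)


end ExtremalElt

section Weyl

variable {I : Type*} {W : Type*} [Group W] {M : CoxeterMatrix I}

/-- `l` is a reduced expression (rex) for `w`. -/
def IsRex (cs : CoxeterSystem M W) (l : List I) (w : W) : Prop :=
  cs.IsReduced l ∧ cs.wordProd l = w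

/-- The strong Bruhat order on `W`, via the subword property:
`u ⪯ w` iff every reduced expression for `w` contains a reduced expression
for `u` as a subword. -/
def BruhatLE (cs : CoxeterSystem M W) (u w : W) : Prop :=
  ∀ l : List I, IsRex cs l w → ∃ l' : List I, l'.Sublist l ∧ IsRex cs l' u

/-- The strict strong Bruhat order. -/
def BruhatLT (cs : CoxeterSystem M W) (u w : W) : Prop :=
  BruhatLE cs u w ∧ u ≠ w

/-- A lower order ideal of `W` under strong Bruhat order. -/
def IsLowerIdeal (cs : CoxeterSystem M W) (S : Set W) : Prop :=
  ∀ u w : W, BruhatLE cs u w → w ∈ S → u ∈ S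

variable {P : Type*} [AddCommGroup P]

/-- `flr` is a "minimal length coset representative" function: for `w : W` and
`μ : P`, the element `flr w μ = ⌊w⌋^μ` is the unique minimal length element of
the coset `w ⋅ Stab_W(μ)` = `{v : W | v • μ = w • μ}`. -/
def IsFloor [MulAction W P] (cs : CoxeterSystem M W) (flr : W → P → W) : Prop :=
  ∀ (w : W) (μ : P),
    flr w μ • μ = w • μ ∧
    (∀ v : W, v • μ = w • μ → cs.length (flr w μ) ≤ cs.length v) ∧
    (∀ v : W, v • μ = w • μ → (∀ v' : W, v' • μ = w • μ →
      cs.length v ≤ cs.length v') → v = flr w μ)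

variable {α : I → P} {coroot : I → P →+ ℤ} {lam : P}

/-- `Dem : W → Set C.B` is the family of Demazure crystals of `B(λ)`:
`Dem w = B_w(λ) = F_w {b_λ}`, computed from any reduced expression of `w`
(by Kashiwara's theorem this is independent of the reduced expression). -/
def IsDemazureFamily (cs : CoxeterSystem M W)
    (C : HighestWeightCrystal I P α coroot lam) (Dem : W → Set C.B) : Prop :=
  ∀ (w : W) (l : List I), IsRex cs l w →
    Dem w = C.toCrystal.Fapply l ({C.hw} : Set C.B)

/-- An extremal subset `X ⊆ B(λ)` is *principal* if there is an extremal element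
`x ∈ X`, of weight `wλ`, such that every extremal element `y ∈ X`, of weight
`uλ`, satisfies `⌊u⌋^λ ⪯ ⌊w⌋^λ` in Bruhat order. -/
def IsPrincipal [MulAction W P] (cs : CoxeterSystem M W) (flr : W → P → W)
    (C : HighestWeightCrystal I P α coroot lam) (X : Set C.B) : Prop :=
  C.toCrystal.IsExtremal X ∧
    ∃ x ∈ X, ∃ w : W, C.wt x = w • lam ∧
      ∀ y ∈ X, ∀ u : W, C.wt y = u • lam →
        BruhatLE cs (flr u lam) (flr w lam)

/-- The Demazure atom `A_w(λ) = B_w(λ) \ ⋃_{v ≺ ⌊w⌋^λ} B_v(λ)`. -/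
def Atom (cs : CoxeterSystem M W) (flr : W → P → W)
    (C : HighestWeightCrystal I P α coroot lam) (Dem : W → Set C.B)
    (w : W) : Set C.B :=
  Dem w \ ⋃ v ∈ {v : W | BruhatLT cs v (flr w lam)}, Dem v

end Weyl

/-- Dominance order on the weight lattice: `μ ≤ ν` iff `ν - μ` is a nonnegative
integer combination of the simple roots. -/
def DomLE {I : Type*} {P : Type*} [AddCommGroup P] (α : I → P) (μ ν : P) : Prop :=
  ∃ c : I →₀ ℕ, ν - μ = c.sum fun i n => (n : ℤ) • α i


/-!
The head `e_i^* b` is the only element of the `i`-string through `b` that `e_i` kills, so an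
extremal set, meeting each string in nothing, everything, or the head, is closed under every
`e_i^*`. Hence in the ideal condition for `X ∪ Y`, both `y` and `x = e_j^* e_{i₁}^* ⋯ e_{i_m}^* y`
lie in whichever of `X`, `Y` contains `y`, and the ideal condition of that set applies.
-/

namespace Crystal

variable {I : Type*} {P : Type*} [AddCommGroup P] {α : I → P} {coroot : I → P →+ ℤ}
  (C : Crystal I P α coroot)

lemma eps_nonneg (i : I) (b : C.B) : 0 ≤ C.eps i b := by
  simpa using (C.eps_spec i b 0).mp rfl

lemma eIter_succ (i : I) (k : ℕ) (b : C.B) :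
    C.eIter i (k + 1) b = (C.eIter i k b).bind (C.e i) :=
  Function.iterate_succ_apply' _ _ _

lemma estar_mem_string (i : I) (b : C.B) : C.estar i b ∈ C.string i b := by
  have hsome : (C.eIter i (C.eps i b).toNat b).isSome :=
    (C.eps_spec i b _).mpr (Int.toNat_of_nonneg (C.eps_nonneg i b)).le
  obtain ⟨c, hc⟩ := Option.isSome_iff_exists.mp hsome
  refine ⟨(C.eps i b).toNat, Or.inl ?_⟩
  simp [estar, hc]

variable {C}

lemma eps_eq_of_eIter_eq_some {i : I} {k : ℕ} {b c : C.B} (hk : C.eIter i k b = some c)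
    (hc : C.e i c = none) : C.eps i b = k := by
  have hle : (k : ℤ) ≤ C.eps i b :=
    (C.eps_spec i b k).mp (show (C.eIter i k b).isSome by simp [hk])
  have hlt : ¬ ((k + 1 : ℕ) : ℤ) ≤ C.eps i b := fun hle' => by
    have hsome : (C.eIter i (k + 1) b).isSome := (C.eps_spec i b _).mpr hle'
    simp [eIter_succ, hk, hc] at hsome
  omega

lemma eq_estar_of_mem_string {i : I} {b c : C.B} (hc : c ∈ C.string i b)
    (hhead : C.e i c = none) : c = C.estar i b := by
  suffices ∃ k, C.eIter i k b = some c by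
    obtain ⟨k, hk⟩ := this
    simp [estar, eps_eq_of_eIter_eq_some hk hhead, hk]
  obtain ⟨k, hk | hk⟩ := hc
  · exact ⟨k, hk⟩
  · cases k with
    | zero => exact ⟨0, hk⟩
    | succ k =>
      -- `c = f_i d` would give `e_i c = d`
      simp only [fIter, Function.iterate_succ_apply'] at hk
      obtain ⟨d, -, hd⟩ := Option.bind_eq_some_iff.mp hk
      simp [(C.e_iff_f i c d).mpr hd] at hhead

lemma IsExtremal.estar_mem {X : Set C.B} (hX : C.IsExtremal X) {b : C.B} (hb : b ∈ X) (i : I) :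
    C.estar i b ∈ X := by
  rcases hX.2 i b with hempty | hall | ⟨h, hhead, hsingle⟩
  · exact (hempty ▸ ⟨⟨0, Or.inl rfl⟩, hb⟩ : b ∈ (∅ : Set C.B)).elim
  · exact (hall.symm ▸ C.estar_mem_string i b : C.estar i b ∈ C.string i b ∩ X).2
  · have hh : h ∈ C.string i b ∩ X := hsingle ▸ rfl
    exact eq_estar_of_mem_string hh.1 hhead ▸ hh.2

lemma IsExtremal.estars_mem {X : Set C.B} (hX : C.IsExtremal X) {b : C.B} (hb : b ∈ X)
    (l : List I) : C.estars l b ∈ X := by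
  induction l with
  | nil => exact hb
  | cons i l ih => exact hX.estar_mem ih i

lemma IsExtremal.union {X Y : Set C.B} (hX : C.IsExtremal X) (hY : C.IsExtremal Y) :
    C.IsExtremal (X ∪ Y) := by
  refine ⟨hX.1.mono Set.subset_union_left, fun i b => ?_⟩
  have hhead : ∀ {h : C.B} {Z : Set C.B}, C.string i b ∩ Z = {h} → h ∈ C.string i b :=
    fun hZ => (Set.singleton_subset_iff.mp hZ.ge).1
  rw [Set.inter_union_distrib_left]
  rcases hX.2 i b with hx | hx | ⟨h, hh, hx⟩ <;>
    rcases hY.2 i b with hy | hy | ⟨h', hh', hy⟩ <;> rw [hx, hy]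
  · simp
  · simp
  · exact Or.inr (Or.inr ⟨h', hh', by simp⟩)
  · simp
  · simp
  · exact Or.inr (Or.inl (Set.union_eq_left.mpr (Set.singleton_subset_iff.mpr (hhead hy))))
  · exact Or.inr (Or.inr ⟨h, hh, by simp⟩)
  · exact Or.inr (Or.inl (Set.union_eq_right.mpr (Set.singleton_subset_iff.mpr (hhead hx))))
  · obtain rfl : h = h' := (eq_estar_of_mem_string (hhead hx) hh).trans
      (eq_estar_of_mem_string (hhead hy) hh').symm
    exact Or.inr (Or.inr ⟨h, hh, by simp⟩)

lemma IsIdeal.union {ext : C.B → Prop} {X Y : Set C.B} (hX : C.IsIdeal ext X)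
    (hY : C.IsIdeal ext Y) : C.IsIdeal ext (X ∪ Y) := by
  refine ⟨hX.1.union hY.1, fun x y j L _ hy hxext hyext hxy => ?_⟩
  rcases hy with hyX | hyY
  · exact Or.inl (hX.2 x y j L (hxy ▸ hX.1.estars_mem hyX _) hyX hxext hyext hxy)
  · exact Or.inr (hY.2 x y j L (hxy ▸ hY.1.estars_mem hyY _) hyY hxext hyext hxy)

end Crystal

theorem union_of_ideal_subsets_general
    {I : Type*} {P : Type*} [AddCommGroup P]
    {α : I → P} {coroot : I → P →+ ℤ}
    {W : Type*} [Group W]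
    [MulAction W P]
    (C : Crystal I P α coroot)
    (X Y : Set C.B)
    (hX : C.IsIdeal (IsExtremalEltGen W C) X)
    (hY : C.IsIdeal (IsExtremalEltGen W C) Y) :
    C.IsIdeal (IsExtremalEltGen W C) (X ∪ Y) :=
  hX.union hY

theorem union_of_ideal_subsets
    {I : Type*} {P : Type*} [AddCommGroup P]
    {α : I → P} {coroot : I → P →+ ℤ}
    {W : Type*} [Group W] {M : CoxeterMatrix I} (cs : CoxeterSystem M W)
    [MulAction W P]
    (hact : ∀ (i : I) (μ : P), cs.simple i • μ = μ - coroot i μ • α i)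
    (C : Crystal I P α coroot) (hC : C.IsHWDecomposable)
    (X Y : Set C.B)
    (hX : C.IsIdeal (IsExtremalEltGen W C) X)
    (hY : C.IsIdeal (IsExtremalEltGen W C) Y) :
    C.IsIdeal (IsExtremalEltGen W C) (X ∪ Y) :=
  union_of_ideal_subsets_general C X Y hX hY

end DemazurePaper
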